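/- For random variables with U₁ − Y₁ − X − Y₂ − U₂, one has I(Y₁,Y₂; U₁,U₂) = I(Y₁;U₁|X) + I(Y₂;U₂|X) + I(X; U₁,U₂). -/

import Mathlib

open Finset

private lemma pull_inner5 {A B C D E : Type*}
    [Fintype A] [Fintype B] [Fintype C] [Fintype D] [Fintype E]
    (f : A → B → C → D → E → ℝ) :
    ∑ b, ∑ c, ∑ d, ∑ e, ∑ a, f a b c d e
      = ∑ a, ∑ b, ∑ c, ∑ d, ∑ e, f a b c d e := by
  calc ∑ b, ∑ c, ∑ d, ∑ e, ∑ a, f a b c d e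
      = ∑ b, ∑ c, ∑ d, ∑ a, ∑ e, f a b c d e :=
        Finset.sum_congr rfl fun _ _ => Finset.sum_congr rfl fun _ _ =>
          Finset.sum_congr rfl fun _ _ => Finset.sum_comm
    _ = ∑ b, ∑ c, ∑ a, ∑ d, ∑ e, f a b c d e :=
        Finset.sum_congr rfl fun _ _ => Finset.sum_congr rfl fun _ _ => Finset.sum_comm
    _ = ∑ b, ∑ a, ∑ c, ∑ d, ∑ e, f a b c d e :=
        Finset.sum_congr rfl fun _ _ => Finset.sum_comm
    _ = ∑ a, ∑ b, ∑ c, ∑ d, ∑ e, f a b c d e := Finset.sum_comm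

private lemma pull_inner3 {B C E : Type*} [Fintype B] [Fintype C] [Fintype E]
    (f : B → C → E → ℝ) :
    ∑ b, ∑ c, ∑ e, f b c e = ∑ e, ∑ b, ∑ c, f b c e := by
  calc ∑ b, ∑ c, ∑ e, f b c e
      = ∑ b, ∑ e, ∑ c, f b c e := Finset.sum_congr rfl fun _ _ => Finset.sum_comm
    _ = ∑ e, ∑ b, ∑ c, f b c e := Finset.sum_comm

private lemma pull_pair4 {B C D E : Type*} [Fintype B] [Fintype C] [Fintype D] [Fintype E]
    (f : B → C → D → E → ℝ) :
    ∑ b, ∑ c, ∑ d, ∑ e, f b c d e = ∑ d, ∑ e, ∑ b, ∑ c, f b c d e := by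
  calc ∑ b, ∑ c, ∑ d, ∑ e, f b c d e
      = ∑ d, ∑ b, ∑ c, ∑ e, f b c d e := pull_inner3 (fun b c d => ∑ e, f b c d e)
    _ = ∑ d, ∑ e, ∑ b, ∑ c, f b c d e :=
        Finset.sum_congr rfl fun d _ => pull_inner3 (fun b c e => f b c d e)

/-- for a Markov chain `U₁ − Y₁ − X − Y₂ − U₂`, i.e. a joint pmf factoring
as `p(x) q₁(y₁|x) q₂(y₂|x) r₁(u₁|y₁) r₂(u₂|y₂)` on finite alphabets,
`I(Y₁,Y₂; U₁,U₂) = I(Y₁;U₁|X) + I(Y₂;U₂|X) + I(X; U₁,U₂)`.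
All mutual informations are written out with the convention `0 · log(···) = 0`
automatically enforced by the vanishing joint mass. -/
theorem mutual_information_decomposition
    {X Y1 Y2 U1 U2 : Type*} [Fintype X] [Fintype Y1] [Fintype Y2] [Fintype U1] [Fintype U2]
    (p : X → ℝ) (hp0 : ∀ x, 0 ≤ p x) (hp1 : ∑ x, p x = 1)
    (q1 : X → Y1 → ℝ) (hq10 : ∀ x y, 0 ≤ q1 x y) (hq11 : ∀ x, ∑ y, q1 x y = 1)
    (q2 : X → Y2 → ℝ) (hq20 : ∀ x y, 0 ≤ q2 x y) (hq21 : ∀ x, ∑ y, q2 x y = 1)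
    (r1 : Y1 → U1 → ℝ) (hr10 : ∀ y u, 0 ≤ r1 y u) (hr11 : ∀ y, ∑ u, r1 y u = 1)
    (r2 : Y2 → U2 → ℝ) (hr20 : ∀ y u, 0 ≤ r2 y u) (hr21 : ∀ y, ∑ u, r2 y u = 1)
    -- joint pmf of (X,Y₁,Y₂,U₁,U₂):
    (W : X → Y1 → Y2 → U1 → U2 → ℝ)
    (hW : ∀ x y1 y2 u1 u2, W x y1 y2 u1 u2 = p x * q1 x y1 * q2 x y2 * r1 y1 u1 * r2 y2 u2)
    -- conditional pmfs p(u₁|x) and p(u₂|x):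
    (c1 : X → U1 → ℝ) (hc1 : ∀ x u1, c1 x u1 = ∑ y1, q1 x y1 * r1 y1 u1)
    (c2 : X → U2 → ℝ) (hc2 : ∀ x u2, c2 x u2 = ∑ y2, q2 x y2 * r2 y2 u2)
    -- joint pmf of ((Y₁,Y₂),(U₁,U₂)) and its marginals:
    (a : Y1 → Y2 → U1 → U2 → ℝ)
    (ha : ∀ y1 y2 u1 u2, a y1 y2 u1 u2 = ∑ x, W x y1 y2 u1 u2)
    (mY : Y1 → Y2 → ℝ) (hmY : ∀ y1 y2, mY y1 y2 = ∑ x, p x * q1 x y1 * q2 x y2)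
    (mU : U1 → U2 → ℝ) (hmU : ∀ u1 u2, mU u1 u2 = ∑ x, p x * c1 x u1 * c2 x u2)
    -- I(Y₁,Y₂; U₁,U₂):
    (Ifull : ℝ)
    (hIfull : Ifull = ∑ y1, ∑ y2, ∑ u1, ∑ u2,
      a y1 y2 u1 u2 * Real.log (a y1 y2 u1 u2 / (mY y1 y2 * mU u1 u2)))
    -- I(Y₁;U₁|X) and I(Y₂;U₂|X):
    (I1 : ℝ) (hI1 : I1 = ∑ x, ∑ y1, ∑ u1,
      p x * q1 x y1 * r1 y1 u1 * Real.log (r1 y1 u1 / c1 x u1))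
    (I2 : ℝ) (hI2 : I2 = ∑ x, ∑ y2, ∑ u2,
      p x * q2 x y2 * r2 y2 u2 * Real.log (r2 y2 u2 / c2 x u2))
    -- I(X; U₁,U₂):
    (I3 : ℝ) (hI3 : I3 = ∑ x, ∑ u1, ∑ u2,
      p x * c1 x u1 * c2 x u2 * Real.log (c1 x u1 * c2 x u2 / mU u1 u2)) :
    Ifull = I1 + I2 + I3 := by
  classical
  have hc10 : ∀ x u, 0 ≤ c1 x u := fun x u => by
    rw [hc1]; exact Finset.sum_nonneg fun y _ => mul_nonneg (hq10 x y) (hr10 y u)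
  have hc20 : ∀ x u, 0 ≤ c2 x u := fun x u => by
    rw [hc2]; exact Finset.sum_nonneg fun y _ => mul_nonneg (hq20 x y) (hr20 y u)
  have ha' : ∀ y1 y2 u1 u2, a y1 y2 u1 u2 = mY y1 y2 * r1 y1 u1 * r2 y2 u2 := by
    intro y1 y2 u1 u2
    rw [ha, hmY]
    simp only [hW, Finset.sum_mul]
  -- pointwise logarithmic decomposition
  have key : ∀ x y1 y2 u1 u2,
      p x * q1 x y1 * q2 x y2 * r1 y1 u1 * r2 y2 u2 *
        Real.log (a y1 y2 u1 u2 / (mY y1 y2 * mU u1 u2))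
      = p x * q1 x y1 * q2 x y2 * r1 y1 u1 * r2 y2 u2 * Real.log (r1 y1 u1 / c1 x u1)
      + p x * q1 x y1 * q2 x y2 * r1 y1 u1 * r2 y2 u2 * Real.log (r2 y2 u2 / c2 x u2)
      + p x * q1 x y1 * q2 x y2 * r1 y1 u1 * r2 y2 u2 *
          Real.log (c1 x u1 * c2 x u2 / mU u1 u2) := by
    intro x y1 y2 u1 u2
    rcases eq_or_ne (p x * q1 x y1 * q2 x y2 * r1 y1 u1 * r2 y2 u2) 0 with h0 | h0
    · rw [h0]; ring
    · simp only [mul_ne_zero_iff] at h0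
      obtain ⟨⟨⟨⟨hpne, hq1ne⟩, hq2ne⟩, hr1ne⟩, hr2ne⟩ := h0
      have hpp : 0 < p x := (hp0 x).lt_of_ne (Ne.symm hpne)
      have hq1p : 0 < q1 x y1 := (hq10 x y1).lt_of_ne (Ne.symm hq1ne)
      have hq2p : 0 < q2 x y2 := (hq20 x y2).lt_of_ne (Ne.symm hq2ne)
      have hr1p : 0 < r1 y1 u1 := (hr10 y1 u1).lt_of_ne (Ne.symm hr1ne)
      have hr2p : 0 < r2 y2 u2 := (hr20 y2 u2).lt_of_ne (Ne.symm hr2ne)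
      have hc1p : 0 < c1 x u1 := by
        rw [hc1]
        exact lt_of_lt_of_le (mul_pos hq1p hr1p)
          (Finset.single_le_sum (fun y _ => mul_nonneg (hq10 x y) (hr10 y u1))
            (Finset.mem_univ y1))
      have hc2p : 0 < c2 x u2 := by
        rw [hc2]
        exact lt_of_lt_of_le (mul_pos hq2p hr2p)
          (Finset.single_le_sum (fun y _ => mul_nonneg (hq20 x y) (hr20 y u2))
            (Finset.mem_univ y2))
      have hmYp : 0 < mY y1 y2 := by
        rw [hmY]
        exact lt_of_lt_of_le (mul_pos (mul_pos hpp hq1p) hq2p)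
          (Finset.single_le_sum
            (fun x' _ => mul_nonneg (mul_nonneg (hp0 x') (hq10 x' y1)) (hq20 x' y2))
            (Finset.mem_univ x))
      have hmUp : 0 < mU u1 u2 := by
        rw [hmU]
        exact lt_of_lt_of_le (mul_pos (mul_pos hpp hc1p) hc2p)
          (Finset.single_le_sum
            (fun x' _ => mul_nonneg (mul_nonneg (hp0 x') (hc10 x' u1)) (hc20 x' u2))
            (Finset.mem_univ x))
      have harg : a y1 y2 u1 u2 / (mY y1 y2 * mU u1 u2)
          = (r1 y1 u1 / c1 x u1) *
              ((r2 y2 u2 / c2 x u2) * (c1 x u1 * c2 x u2 / mU u1 u2)) := by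
        rw [ha']
        field_simp
      rw [harg, Real.log_mul (div_pos hr1p hc1p).ne'
          (mul_pos (div_pos hr2p hc2p) (div_pos (mul_pos hc1p hc2p) hmUp)).ne',
        Real.log_mul (div_pos hr2p hc2p).ne' (div_pos (mul_pos hc1p hc2p) hmUp).ne']
      ring
  have hIfull2 : Ifull = ∑ y1, ∑ y2, ∑ u1, ∑ u2, ∑ x,
      (p x * q1 x y1 * q2 x y2 * r1 y1 u1 * r2 y2 u2 * Real.log (r1 y1 u1 / c1 x u1)
      + p x * q1 x y1 * q2 x y2 * r1 y1 u1 * r2 y2 u2 * Real.log (r2 y2 u2 / c2 x u2)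
      + p x * q1 x y1 * q2 x y2 * r1 y1 u1 * r2 y2 u2 *
          Real.log (c1 x u1 * c2 x u2 / mU u1 u2)) := by
    rw [hIfull]
    refine Finset.sum_congr rfl fun y1 _ => Finset.sum_congr rfl fun y2 _ =>
      Finset.sum_congr rfl fun u1 _ => Finset.sum_congr rfl fun u2 _ => ?_
    nth_rewrite 1 [ha y1 y2 u1 u2]
    rw [Finset.sum_mul]
    exact Finset.sum_congr rfl fun x _ => by rw [hW]; exact key x y1 y2 u1 u2
  simp only [Finset.sum_add_distrib] at hIfull2
  -- first block equals I1
  have hS1 : (∑ y1, ∑ y2, ∑ u1, ∑ u2, ∑ x,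
      p x * q1 x y1 * q2 x y2 * r1 y1 u1 * r2 y2 u2 * Real.log (r1 y1 u1 / c1 x u1)) = I1 := by
    rw [pull_inner5, hI1]
    refine Finset.sum_congr rfl fun x _ => Finset.sum_congr rfl fun y1 _ => ?_
    have hu2 : ∀ y2 u1, (∑ u2, p x * q1 x y1 * q2 x y2 * r1 y1 u1 * r2 y2 u2 *
        Real.log (r1 y1 u1 / c1 x u1))
        = q2 x y2 * (p x * q1 x y1 * r1 y1 u1 * Real.log (r1 y1 u1 / c1 x u1)) := by
      intro y2 u1
      rw [show (∑ u2, p x * q1 x y1 * q2 x y2 * r1 y1 u1 * r2 y2 u2 *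
          Real.log (r1 y1 u1 / c1 x u1))
        = (q2 x y2 * (p x * q1 x y1 * r1 y1 u1 * Real.log (r1 y1 u1 / c1 x u1))) *
            ∑ u2, r2 y2 u2 from by rw [Finset.mul_sum]; exact Finset.sum_congr rfl fun _ _ => by ring]
      rw [hr21, mul_one]
    simp only [hu2]
    calc ∑ y2, ∑ u1, q2 x y2 * (p x * q1 x y1 * r1 y1 u1 * Real.log (r1 y1 u1 / c1 x u1))
        = ∑ y2, q2 x y2 * ∑ u1, p x * q1 x y1 * r1 y1 u1 * Real.log (r1 y1 u1 / c1 x u1) :=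
          Finset.sum_congr rfl fun y2 _ => (Finset.mul_sum _ _ _).symm
      _ = (∑ y2, q2 x y2) * ∑ u1, p x * q1 x y1 * r1 y1 u1 * Real.log (r1 y1 u1 / c1 x u1) :=
          (Finset.sum_mul _ _ _).symm
      _ = _ := by rw [hq21, one_mul]
  -- second block equals I2
  have hS2 : (∑ y1, ∑ y2, ∑ u1, ∑ u2, ∑ x,
      p x * q1 x y1 * q2 x y2 * r1 y1 u1 * r2 y2 u2 * Real.log (r2 y2 u2 / c2 x u2)) = I2 := by
    rw [pull_inner5, hI2]
    refine Finset.sum_congr rfl fun x _ => ?_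
    have hswap : ∀ y1 y2, (∑ u1, ∑ u2, p x * q1 x y1 * q2 x y2 * r1 y1 u1 * r2 y2 u2 *
        Real.log (r2 y2 u2 / c2 x u2))
        = ∑ u2, ∑ u1, p x * q1 x y1 * q2 x y2 * r1 y1 u1 * r2 y2 u2 *
            Real.log (r2 y2 u2 / c2 x u2) := fun _ _ => Finset.sum_comm
    simp only [hswap]
    have hu1 : ∀ y1 y2 u2, (∑ u1, p x * q1 x y1 * q2 x y2 * r1 y1 u1 * r2 y2 u2 *
        Real.log (r2 y2 u2 / c2 x u2))
        = q1 x y1 * (p x * q2 x y2 * r2 y2 u2 * Real.log (r2 y2 u2 / c2 x u2)) := by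
      intro y1 y2 u2
      rw [show (∑ u1, p x * q1 x y1 * q2 x y2 * r1 y1 u1 * r2 y2 u2 *
          Real.log (r2 y2 u2 / c2 x u2))
        = (q1 x y1 * (p x * q2 x y2 * r2 y2 u2 * Real.log (r2 y2 u2 / c2 x u2))) *
            ∑ u1, r1 y1 u1 from by rw [Finset.mul_sum]; exact Finset.sum_congr rfl fun _ _ => by ring]
      rw [hr11, mul_one]
    simp only [hu1]
    calc ∑ y1, ∑ y2, ∑ u2, q1 x y1 * (p x * q2 x y2 * r2 y2 u2 * Real.log (r2 y2 u2 / c2 x u2))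
        = ∑ y1, q1 x y1 * ∑ y2, ∑ u2, p x * q2 x y2 * r2 y2 u2 * Real.log (r2 y2 u2 / c2 x u2) := by
          refine Finset.sum_congr rfl fun y1 _ => ?_
          rw [Finset.mul_sum]
          exact Finset.sum_congr rfl fun y2 _ => (Finset.mul_sum _ _ _).symm
      _ = (∑ y1, q1 x y1) * ∑ y2, ∑ u2, p x * q2 x y2 * r2 y2 u2 * Real.log (r2 y2 u2 / c2 x u2) :=
          (Finset.sum_mul _ _ _).symm
      _ = _ := by rw [hq11, one_mul]
  -- third block equals I3
  have hS3 : (∑ y1, ∑ y2, ∑ u1, ∑ u2, ∑ x,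
      p x * q1 x y1 * q2 x y2 * r1 y1 u1 * r2 y2 u2 *
        Real.log (c1 x u1 * c2 x u2 / mU u1 u2)) = I3 := by
    rw [pull_inner5, hI3]
    refine Finset.sum_congr rfl fun x _ => ?_
    rw [pull_pair4 (fun y1 y2 u1 u2 => p x * q1 x y1 * q2 x y2 * r1 y1 u1 * r2 y2 u2 *
        Real.log (c1 x u1 * c2 x u2 / mU u1 u2))]
    refine Finset.sum_congr rfl fun u1 _ => Finset.sum_congr rfl fun u2 _ => ?_
    have hy2 : ∀ y1, (∑ y2, p x * q1 x y1 * q2 x y2 * r1 y1 u1 * r2 y2 u2 *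
        Real.log (c1 x u1 * c2 x u2 / mU u1 u2))
        = q1 x y1 * r1 y1 u1 * (p x * c2 x u2 * Real.log (c1 x u1 * c2 x u2 / mU u1 u2)) := by
      intro y1
      rw [show (∑ y2, p x * q1 x y1 * q2 x y2 * r1 y1 u1 * r2 y2 u2 *
          Real.log (c1 x u1 * c2 x u2 / mU u1 u2))
        = (q1 x y1 * r1 y1 u1 * (p x * Real.log (c1 x u1 * c2 x u2 / mU u1 u2))) *
            ∑ y2, q2 x y2 * r2 y2 u2 from by
          rw [Finset.mul_sum]; exact Finset.sum_congr rfl fun _ _ => by ring]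
      rw [← hc2]
      ring
    simp only [hy2]
    calc ∑ y1, q1 x y1 * r1 y1 u1 *
          (p x * c2 x u2 * Real.log (c1 x u1 * c2 x u2 / mU u1 u2))
        = (∑ y1, q1 x y1 * r1 y1 u1) *
            (p x * c2 x u2 * Real.log (c1 x u1 * c2 x u2 / mU u1 u2)) :=
          (Finset.sum_mul _ _ _).symm
      _ = _ := by rw [← hc1]; ring
  rw [hIfull2, hS1, hS2, hS3]
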